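/- For all nonnegative integers m and n and an indeterminate z, (zq;q)_m · (z^{-1};q)_n = Σ_{k=-n}^{m} (-1)^k · q^{binom(k+1,2)} · z^k · [m+n choose n+k]_q, where (x;q)_r = ∏_{i=0}^{r-1}(1 - x q^i). This holds as an identity of Laurent polynomials in z with polynomial coefficients in q (equivalently for all nonzero complex z and all complex q). -/
import Mathlib

open Finset Polynomial

/-- The q-shifted factorial `(q;q)_r = ∏_{i=1}^r (1 - q^i)` in `ℚ(q)`. -/
noncomputable def qPoch (r : ℕ) : RatFunc ℚ :=
  ∏ i ∈ Finset.range r, (1 - (RatFunc.X : RatFunc ℚ) ^ (i + 1))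

/-- The Gaussian binomial coefficient `[a choose b]_q`, zero outside `0 ≤ b ≤ a`. -/
noncomputable def qbinom (a : ℕ) (b : ℤ) : RatFunc ℚ :=
  if 0 ≤ b ∧ b ≤ (a : ℤ) then qPoch a / (qPoch b.toNat * qPoch (a - b.toNat)) else 0

local notation "q" => (RatFunc.X : RatFunc ℚ)


lemma X_pow_ne_one (r : ℕ) (hr : r ≠ 0) : q ^ r ≠ 1 := by
  intro h
  have h2 : (algebraMap ℚ[X] (RatFunc ℚ)) (Polynomial.X ^ r) = (algebraMap ℚ[X] (RatFunc ℚ)) 1 := by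
    simpa [RatFunc.algebraMap_X] using h
  have h3 : (Polynomial.X : ℚ[X]) ^ r = 1 := RatFunc.algebraMap_injective ℚ h2
  have := congrArg Polynomial.natDegree h3
  simp [Polynomial.natDegree_X_pow] at this
  exact hr this

lemma qPoch_ne_zero (r : ℕ) : qPoch r ≠ 0 := by
  apply Finset.prod_ne_zero_iff.2
  intro i _ h
  apply X_pow_ne_one (i+1) (by omega)
  linear_combination -h

lemma qPoch_succ (r : ℕ) : qPoch (r+1) = qPoch r * (1 - q ^ (r+1)) := by
  simp [qPoch, Finset.prod_range_succ]

lemma qbinom_of (a b : ℕ) (h : b ≤ a) :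
    qbinom a (b : ℤ) = qPoch a / (qPoch b * qPoch (a - b)) := by
  rw [qbinom, if_pos ⟨by positivity, by exact_mod_cast h⟩]
  simp

lemma qbinom_neg (a : ℕ) (b : ℤ) (h : b < 0) : qbinom a b = 0 := by
  simp [qbinom]; omega

lemma qbinom_gt (a : ℕ) (b : ℤ) (h : (a:ℤ) < b) : qbinom a b = 0 := by
  simp [qbinom]; omega

lemma qbinom_zero (a : ℕ) : qbinom a 0 = 1 := by
  have := qbinom_of a 0 (by omega)
  simp only [Nat.cast_zero] at this
  rw [this, show qPoch 0 = 1 by simp [qPoch], one_mul, Nat.sub_zero,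
    div_self (qPoch_ne_zero a)]

lemma qbinom_self (a : ℕ) : qbinom a (a:ℤ) = 1 := by
  have := qbinom_of a a le_rfl
  simp only [Nat.sub_self] at this
  rw [this, show qPoch 0 = 1 by simp [qPoch], mul_one, div_self (qPoch_ne_zero a)]

-- interior Pascal, first form
lemma pascal1_core (b c : ℕ) :
    qbinom (b+c+2) ((b:ℤ)+1) = q^(b+1) * qbinom (b+c+1) ((b:ℤ)+1) + qbinom (b+c+1) (b:ℤ) := by
  have e1 : qbinom (b+c+2) ((b:ℤ)+1) = qPoch (b+c+2) / (qPoch (b+1) * qPoch (c+1)) := by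
    rw [show ((b:ℤ)+1) = ((b+1 : ℕ) : ℤ) by push_cast; ring, qbinom_of _ _ (by omega),
      show b+c+2 - (b+1) = c+1 by omega]
  have e2 : qbinom (b+c+1) ((b:ℤ)+1) = qPoch (b+c+1) / (qPoch (b+1) * qPoch c) := by
    rw [show ((b:ℤ)+1) = ((b+1 : ℕ) : ℤ) by push_cast; ring, qbinom_of _ _ (by omega),
      show b+c+1 - (b+1) = c by omega]
  have e3 : qbinom (b+c+1) (b:ℤ) = qPoch (b+c+1) / (qPoch b * qPoch (c+1)) := by
    rw [qbinom_of _ _ (by omega), show b+c+1 - b = c+1 by omega]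
  rw [e1, e2, e3, show b+c+2 = (b+c+1)+1 from rfl, qPoch_succ (b+c+1), qPoch_succ b, qPoch_succ c]
  have hb := qPoch_ne_zero b
  have hc := qPoch_ne_zero c
  have hbc := qPoch_ne_zero (b+c+1)
  have h1 : (1 : RatFunc ℚ) - q^(b+1) ≠ 0 := by
    have := qPoch_ne_zero (b+1); rw [qPoch_succ b] at this; exact right_ne_zero_of_mul this
  have h2 : (1 : RatFunc ℚ) - q^(c+1) ≠ 0 := by
    have := qPoch_ne_zero (c+1); rw [qPoch_succ c] at this; exact right_ne_zero_of_mul this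
  field_simp
  rw [show b+c+1+1 = (b+1)+(c+1) by omega, pow_add]
  ring

lemma pascal2_core (b c : ℕ) :
    qbinom (b+c+2) ((b:ℤ)+1) = qbinom (b+c+1) ((b:ℤ)+1) + q^(c+1) * qbinom (b+c+1) (b:ℤ) := by
  have e1 : qbinom (b+c+2) ((b:ℤ)+1) = qPoch (b+c+2) / (qPoch (b+1) * qPoch (c+1)) := by
    rw [show ((b:ℤ)+1) = ((b+1 : ℕ) : ℤ) by push_cast; ring, qbinom_of _ _ (by omega),
      show b+c+2 - (b+1) = c+1 by omega]
  have e2 : qbinom (b+c+1) ((b:ℤ)+1) = qPoch (b+c+1) / (qPoch (b+1) * qPoch c) := by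
    rw [show ((b:ℤ)+1) = ((b+1 : ℕ) : ℤ) by push_cast; ring, qbinom_of _ _ (by omega),
      show b+c+1 - (b+1) = c by omega]
  have e3 : qbinom (b+c+1) (b:ℤ) = qPoch (b+c+1) / (qPoch b * qPoch (c+1)) := by
    rw [qbinom_of _ _ (by omega), show b+c+1 - b = c+1 by omega]
  rw [e1, e2, e3, show b+c+2 = (b+c+1)+1 from rfl, qPoch_succ (b+c+1), qPoch_succ b, qPoch_succ c]
  have hb := qPoch_ne_zero b
  have hc := qPoch_ne_zero c
  have hbc := qPoch_ne_zero (b+c+1)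
  have h1 : (1 : RatFunc ℚ) - q^(b+1) ≠ 0 := by
    have := qPoch_ne_zero (b+1); rw [qPoch_succ b] at this; exact right_ne_zero_of_mul this
  have h2 : (1 : RatFunc ℚ) - q^(c+1) ≠ 0 := by
    have := qPoch_ne_zero (c+1); rw [qPoch_succ c] at this; exact right_ne_zero_of_mul this
  field_simp
  rw [show b+c+1+1 = (b+1)+(c+1) by omega, pow_add]
  ring

lemma pascal1 (a : ℕ) (b : ℤ) :
    qbinom (a+1) b = q ^ b * qbinom a b + qbinom a (b-1) := by
  rcases lt_or_ge b 0 with hb | hb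
  · rw [qbinom_neg _ _ hb, qbinom_neg _ _ hb, qbinom_neg _ _ (by omega)]; ring
  · lift b to ℕ using hb
    rcases b with _ | b'
    · simp [qbinom_zero, qbinom_neg _ (-1) (by omega)]
    · push_cast
      rw [show ((b':ℕ):ℤ) + 1 - 1 = (b':ℤ) by ring]
      rcases lt_or_ge (a:ℤ) (b':ℤ) with hba | hba
      · rw [qbinom_gt _ _ (by push_cast; omega), qbinom_gt _ _ (by push_cast; omega),
          qbinom_gt _ _ (by push_cast; omega)]
        ring
      · have hba' : b' ≤ a := by exact_mod_cast hba
        rcases Nat.lt_or_ge b' a with hlt | hge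
        · obtain ⟨c, hc⟩ : ∃ c, a = b' + c + 1 := ⟨a - b' - 1, by omega⟩
          subst hc
          rw [show b'+c+1+1 = b'+c+2 by omega, pascal1_core b' c]
          norm_cast
        · have : b' = a := by omega
          subst this
          rw [show ((b':ℤ)+1) = (((b'+1:ℕ)):ℤ) by push_cast; ring, qbinom_self (b'+1),
            qbinom_gt b' _ (by push_cast; omega), qbinom_self b']
          norm_cast
          ring

lemma pascal2 (a : ℕ) (b : ℤ) :
    qbinom (a+1) b = qbinom a b + q ^ ((a:ℤ)+1-b) * qbinom a (b-1) := by
  rcases lt_or_ge b 0 with hb | hb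
  · rw [qbinom_neg _ _ hb, qbinom_neg _ _ hb, qbinom_neg _ _ (by omega)]; ring
  · lift b to ℕ using hb
    rcases b with _ | b'
    · simp [qbinom_zero, qbinom_neg _ (-1) (by omega)]
    · push_cast
      rw [show ((b':ℕ):ℤ) + 1 - 1 = (b':ℤ) by ring]
      rcases lt_or_ge (a:ℤ) (b':ℤ) with hba | hba
      · rw [qbinom_gt _ _ (by push_cast; omega), qbinom_gt _ _ (by push_cast; omega),
          qbinom_gt _ _ (by push_cast; omega)]
        ring
      · have hba' : b' ≤ a := by exact_mod_cast hba
        rcases Nat.lt_or_ge b' a with hlt | hge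
        · obtain ⟨c, hc⟩ : ∃ c, a = b' + c + 1 := ⟨a - b' - 1, by omega⟩
          subst hc
          rw [show b'+c+1+1 = b'+c+2 by omega, pascal2_core b' c,
            show ((b'+c+1:ℕ):ℤ)+1-((b':ℤ)+1) = ((c+1 : ℕ) : ℤ) by push_cast; ring]
          rw [zpow_natCast]
        · have : b' = a := by omega
          subst this
          rw [show ((b':ℤ)+1) = (((b'+1:ℕ)):ℤ) by push_cast; ring, qbinom_self (b'+1),
            qbinom_gt b' _ (by push_cast; omega), qbinom_self b']
          simp

lemma hq : q ≠ 0 := RatFunc.X_ne_zero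

lemma hdiv (k : ℤ) : (k+1)*(k+2)/2 = k*(k+1)/2 + (k+1) := by
  have h2 : ((k+1)*(k+2)) = k*(k+1) + (k+1)*2 := by ring
  rw [h2, Int.add_mul_ediv_right _ _ two_ne_zero]

lemma icc_top (m : ℕ) (a : ℤ) (h : a ≤ (m:ℤ)) :
    Icc a ((m:ℤ)+1) = insert ((m:ℤ)+1) (Icc a (m:ℤ)) := by
  ext x; simp [Finset.mem_Icc]; omega

lemma icc_bot (m a : ℤ) (h : a ≤ m) :
    Icc (a-1) m = insert (a-1) (Icc a m) := by
  ext x; simp [Finset.mem_Icc]; omega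

lemma qbinom_thm (m : ℕ) (z : RatFunc ℚ) (hz : z ≠ 0) :
    ∏ i ∈ Finset.range m, (1 - z * q ^ (i+1)) =
      ∑ k ∈ Finset.Icc (0:ℤ) (m:ℤ),
        (-1 : RatFunc ℚ) ^ k * q ^ (k*(k+1)/2) * z ^ k * qbinom m k := by
  induction m with
  | zero => simp [qbinom_zero]
  | succ m ih =>
    rw [Finset.prod_range_succ, ih, mul_sub, mul_one]
    push_cast
    have hrw : ∀ k ∈ Icc (0:ℤ) ((m:ℤ)+1),
        (-1:RatFunc ℚ)^k * q^(k*(k+1)/2) * z^k * qbinom (m+1) k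
      = (-1:RatFunc ℚ)^k * q^(k*(k+1)/2) * z^k * qbinom m k
        + (-1:RatFunc ℚ)^k * q^(k*(k+1)/2) * z^k * (q^((m:ℤ)+1-k) * qbinom m (k-1)) := by
      intro k hk; rw [pascal2]; ring
    rw [Finset.sum_congr rfl hrw, Finset.sum_add_distrib]
    have hs1 : ∑ k ∈ Icc (0:ℤ) ((m:ℤ)+1),
        (-1:RatFunc ℚ)^k * q^(k*(k+1)/2) * z^k * qbinom m k
      = ∑ k ∈ Icc (0:ℤ) (m:ℤ), (-1:RatFunc ℚ)^k * q^(k*(k+1)/2) * z^k * qbinom m k := by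
      rw [icc_top m 0 (by positivity), Finset.sum_insert (by simp),
        qbinom_gt m _ (by omega)]
      ring
    have hmap : Finset.map (addRightEmbedding (1:ℤ)) (Icc (-1:ℤ) (m:ℤ)) = Icc (0:ℤ) ((m:ℤ)+1) := by
      rw [Finset.map_add_right_Icc]; norm_num
    have hs2 : ∑ k ∈ Icc (0:ℤ) ((m:ℤ)+1),
        (-1:RatFunc ℚ)^k * q^(k*(k+1)/2) * z^k * (q^((m:ℤ)+1-k) * qbinom m (k-1))
      = -((∑ k ∈ Icc (0:ℤ) (m:ℤ), (-1:RatFunc ℚ)^k * q^(k*(k+1)/2) * z^k * qbinom m k)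
          * (z * q^(m+1))) := by
      rw [← hmap, Finset.sum_map]
      simp only [addRightEmbedding_apply]
      rw [show Icc (-1:ℤ) (m:ℤ) = insert (-1:ℤ) (Icc 0 (m:ℤ)) by ext x; simp [Finset.mem_Icc]; omega,
        Finset.sum_insert (by simp)]
      rw [show (-1:ℤ)+1 = 0 by ring]
      norm_num
      rw [qbinom_neg m _ (by omega), Finset.sum_mul, ← Finset.sum_neg_distrib]
      rw [show ((0:RatFunc ℚ) = 0) from rfl]
      simp only [mul_zero, zero_add]
      apply Finset.sum_congr rfl
      intro k hk
      have e1 : ((-1):RatFunc ℚ)^(k+1) = (-1)^k * (-1) := by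
        rw [zpow_add₀ (by norm_num : (-1:RatFunc ℚ) ≠ 0), zpow_one]
      have e2 : z^(k+1) = z^k * z := by rw [zpow_add₀ hz, zpow_one]
      have e3 : q^((k+1)*(k+1+1)/2) = q^(k*(k+1)/2) * q^((k+1):ℤ) := by
        rw [show (k+1)*(k+1+1) = (k+1)*(k+2) from by ring, hdiv, zpow_add₀ hq]
      have e4 : q^((k+1):ℤ) * q^((m:ℤ)-k) = q^((m+1:ℕ)) := by
        rw [← zpow_add₀ hq, show (k+1) + ((m:ℤ)-k) = ((m+1:ℕ):ℤ) by push_cast; ring,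
          zpow_natCast]
      rw [e1, e2, e3]
      push_cast at e4 ⊢
      linear_combination (-((-1:RatFunc ℚ)^k * q^(k*(k+1)/2) * z^k * z * qbinom m k)) * e4
    rw [hs1, hs2]
    ring

/-- MacMahon's finite form of Jacobi's triple product identity. -/
theorem macmahon_finite_triple_product (m n : ℕ) (z : RatFunc ℚ) (hz : z ≠ 0) :
    (∏ i ∈ Finset.range m, (1 - z * (RatFunc.X : RatFunc ℚ) ^ (i + 1))) *
      (∏ i ∈ Finset.range n, (1 - z⁻¹ * (RatFunc.X : RatFunc ℚ) ^ i)) =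
      ∑ k ∈ Finset.Icc (-(n : ℤ)) (m : ℤ),
        (-1 : RatFunc ℚ) ^ k * (RatFunc.X : RatFunc ℚ) ^ (k * (k + 1) / 2) * z ^ k *
          qbinom (m + n) ((n : ℤ) + k) := by
  induction n with
  | zero => simpa using qbinom_thm m z hz
  | succ n ih =>
    rw [Finset.prod_range_succ, ← mul_assoc, ih, mul_sub, mul_one]
    push_cast
    have hrw : ∀ k ∈ Icc (-((n:ℤ)+1)) (m:ℤ),
        (-1:RatFunc ℚ)^k * q^(k*(k+1)/2) * z^k * qbinom (m+(n+1)) ((n:ℤ)+1+k)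
      = (-1:RatFunc ℚ)^k * q^(k*(k+1)/2) * z^k * (q^((n:ℤ)+1+k) * qbinom (m+n) ((n:ℤ)+1+k))
        + (-1:RatFunc ℚ)^k * q^(k*(k+1)/2) * z^k * qbinom (m+n) ((n:ℤ)+k) := by
      intro k hk
      rw [show m+(n+1) = (m+n)+1 by omega, pascal1, show (n:ℤ)+1+k-1 = (n:ℤ)+k by ring]
      ring
    rw [Finset.sum_congr rfl hrw, Finset.sum_add_distrib]
    have hs2 : ∑ k ∈ Icc (-((n:ℤ)+1)) (m:ℤ),
        (-1:RatFunc ℚ)^k * q^(k*(k+1)/2) * z^k * qbinom (m+n) ((n:ℤ)+k)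
      = ∑ k ∈ Icc (-(n:ℤ)) (m:ℤ),
        (-1:RatFunc ℚ)^k * q^(k*(k+1)/2) * z^k * qbinom (m+n) ((n:ℤ)+k) := by
      rw [show Icc (-((n:ℤ)+1)) (m:ℤ) = insert (-((n:ℤ)+1)) (Icc (-(n:ℤ)) (m:ℤ)) by
          ext x; simp [Finset.mem_Icc]; omega,
        Finset.sum_insert (by simp only [Finset.mem_Icc]; omega),
        qbinom_neg (m+n) _ (by omega)]
      ring
    have hmap : Finset.map (addRightEmbedding (1:ℤ)) (Icc (-((n:ℤ)+1)) ((m:ℤ)-1))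
        = Icc (-(n:ℤ)) (m:ℤ) := by
      rw [Finset.map_add_right_Icc]; norm_num
    have hs1 : ∑ k ∈ Icc (-((n:ℤ)+1)) (m:ℤ),
        (-1:RatFunc ℚ)^k * q^(k*(k+1)/2) * z^k * (q^((n:ℤ)+1+k) * qbinom (m+n) ((n:ℤ)+1+k))
      = -((∑ k ∈ Icc (-(n:ℤ)) (m:ℤ),
            (-1:RatFunc ℚ)^k * q^(k*(k+1)/2) * z^k * qbinom (m+n) ((n:ℤ)+k))
          * (z⁻¹ * q^n)) := by
      rw [show Icc (-((n:ℤ)+1)) (m:ℤ) = insert (m:ℤ) (Icc (-((n:ℤ)+1)) ((m:ℤ)-1)) by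
          ext x; simp [Finset.mem_Icc]; omega,
        Finset.sum_insert (by simp [Finset.mem_Icc]),
        qbinom_gt (m+n) _ (by push_cast; omega)]
      rw [← hmap, Finset.sum_map, Finset.sum_mul, ← Finset.sum_neg_distrib]
      simp only [addRightEmbedding_apply, mul_zero, zero_add]
      apply Finset.sum_congr rfl
      intro k hk
      have e1 : ((-1):RatFunc ℚ)^(k+1) = (-1)^k * (-1) := by
        rw [zpow_add₀ (by norm_num : (-1:RatFunc ℚ) ≠ 0), zpow_one]
      have e2 : z^(k+1) = z^k * z := by rw [zpow_add₀ hz, zpow_one]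
      have e3 : q^((k+1)*(k+1+1)/2) = q^(k*(k+1)/2) * q^((k+1):ℤ) := by
        rw [show (k+1)*(k+1+1) = (k+1)*(k+2) from by ring, hdiv, zpow_add₀ hq]
      have e4 : q^((n:ℤ)+1+k) = q^((k+1):ℤ) * q^(n:ℕ) := by
        rw [← zpow_natCast q n, ← zpow_add₀ hq]
        congr 1
        push_cast; ring
      have e5 : z * z⁻¹ = 1 := mul_inv_cancel₀ hz
      rw [show (n:ℤ)+(k+1) = (n:ℤ)+1+k by ring, e1, e2, e3, e4]
      linear_combination (-((-1:RatFunc ℚ)^k * q^(k*(k+1)/2) * q^((k+1):ℤ) * z^k * q^(n:ℕ)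
        * qbinom (m+n) ((n:ℤ)+1+k))) * e5
    rw [hs1, hs2]
    ring
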